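/- Let (a_n)_{n≥1} be a sequence in the class A_ST satisfying Assumption A2. Then ∑_{p prime, a_p = 0} 1/p < ∞, and consequently the infinite product κ = ∏_{p prime, a_p = 0} (1 − 1/p) converges to a strictly positive real number. -/

import Mathlib

open Filter Finset MeasureTheory Asymptotics
open scoped Classical

noncomputable section

/-- `log₁ x = max (log x) 1`, and `logₖ x = log₁ (log_{k-1} x)` (iterated logarithm). -/
def log1 (x : ℝ) : ℝ := max (Real.log x) 1
def log2 (x : ℝ) : ℝ := log1 (log1 x)
def log3 (x : ℝ) : ℝ := log1 (log2 x)
def log4 (x : ℝ) : ℝ := log1 (log3 x)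

/-- The finite set of primes `p ≤ x`. -/
def primesUpTo (x : ℝ) : Finset ℕ := (Finset.range (⌊x⌋₊ + 1)).filter Nat.Prime

/-- The Sato–Tate angle `θ_p ∈ [0, π]` defined by `a p = 2 cos θ_p`. -/
def thetaOf (a : ℕ → ℝ) (p : ℕ) : ℝ := Real.arccos (a p / 2)

/-- The class `A_ST`: multiplicativity, Sato–Tate distribution of the angles at primes,
and growth bound at prime powers. -/
def IsAST (a : ℕ → ℝ) : Prop :=
  (∀ m n : ℕ, 0 < m → 0 < n → Nat.Coprime m n → a (m * n) = a m * a n) ∧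
  (∀ p : ℕ, p.Prime → a p ∈ Set.Icc (-2 : ℝ) 2) ∧
  (∀ α : ℝ, 0 ≤ α → α < Real.pi →
    Tendsto (fun x : ℝ =>
        (((primesUpTo x).filter (fun p => thetaOf a p ∈ Set.Icc 0 α)).card : ℝ) /
          ((primesUpTo x).card : ℝ))
      atTop (nhds ((2 / Real.pi) * ∫ θ in (0:ℝ)..α, Real.sin θ ^ 2))) ∧
  (∃ ϱ : ℝ, 0 < ϱ ∧ ∀ p k : ℕ, p.Prime → 2 ≤ k →
    |a (p ^ k)| ≤ (p : ℝ) ^ (((k : ℝ) - 1) / 2 - ϱ))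

/-- Assumption A1: `|a_{p^k}| ≥ c₀ p^{-Ck}` whenever `a_p ≠ 0`. -/
def A1 (a : ℕ → ℝ) : Prop :=
  ∃ C : ℝ, 0 < C ∧ ∃ c₀ : ℝ, 0 < c₀ ∧ ∀ p k : ℕ, p.Prime → a p ≠ 0 → 1 ≤ k →
    c₀ * (p : ℝ) ^ (-(C * k)) ≤ |a (p ^ k)|

/-- Assumption A2: effective Sato–Tate with error `O((log₂ x)^{-A})` for every `A > 0`. -/
def A2 (a : ℕ → ℝ) : Prop :=
  ∀ A : ℝ, 0 < A → ∃ K : ℝ, ∀ α β x : ℝ, 0 ≤ α → α ≤ β → β ≤ Real.pi → 3 ≤ x →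
    |(((primesUpTo x).filter (fun p => thetaOf a p ∈ Set.Icc α β)).card : ℝ) /
        ((primesUpTo x).card : ℝ) -
      (2 / Real.pi) * ∫ θ in α..β, Real.sin θ ^ 2| ≤ K * (log2 x) ^ (-A)

/-- `N(x) = {n ≤ x : a_n ≠ 0}`. -/
def NN (a : ℕ → ℝ) (x : ℝ) : Finset ℕ := (Finset.Icc 1 ⌊x⌋₊).filter (fun n => a n ≠ 0)

/-- `N_A(x)`: members of `N(x)` all of whose prime divisors `p` satisfy
`|a_p| > (log₂ x)^{-A}`. -/
def NA (a : ℕ → ℝ) (A x : ℝ) : Finset ℕ :=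
  (NN a x).filter (fun n => ∀ p : ℕ, p.Prime → p ∣ n → (log2 x) ^ (-A) < |a p|)

/-- The strongly multiplicative function `h` with `h(p^k) = a_p`. -/
def hmul (a : ℕ → ℝ) (n : ℕ) : ℝ := ∏ p ∈ n.primeFactors, a p

end


-- ===== auxiliary lemmas =====

lemma aux_two_mul_le_two_pow : ∀ u : ℕ, 1 ≤ u → 2*u ≤ 2^u := by
  intro u hu
  induction u with
  | zero => omega
  | succ n ih =>
    rcases Nat.eq_zero_or_pos n with h | h
    · subst h; norm_num
    · have h2 : 2 ≤ 2^n := by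
        calc 2 = 2^1 := rfl
        _ ≤ 2^n := Nat.pow_le_pow_right (by norm_num) h
      have := ih h
      calc 2*(n+1) = 2*n + 2 := by ring
      _ ≤ 2^n + 2^n := by omega
      _ = 2^(n+1) := by ring

/-- Chebyshev-type upper bound at dyadic points, from `primorial_le_4_pow`. -/
lemma cheb (k : ℕ) : (((Finset.range (2^(k+1)+1)).filter Nat.Prime).card) * (k+1) ≤ 2^(k+4) := by
  set n := 2^(k+1) with hn
  set j := (k+2)/2 with hj
  set m := 2^j with hm
  set T := (Finset.range (n+1)).filter Nat.Prime with hT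
  set S := (Finset.range (n+1)).filter (fun p => Nat.Prime p ∧ m < p) with hS
  have h1 : T.card ≤ (m+1) + S.card := by
    have hsub : T ⊆ (Finset.range (m+1)) ∪ S := by
      intro p hp
      rw [hT, Finset.mem_filter] at hp
      rcases le_or_gt p m with h | h
      · exact Finset.mem_union_left _ (Finset.mem_range.2 (by omega))
      · exact Finset.mem_union_right _ (by rw [hS, Finset.mem_filter]; exact ⟨hp.1, hp.2, h⟩)
    calc T.card ≤ ((Finset.range (m+1)) ∪ S).card := Finset.card_le_card hsub
    _ ≤ (Finset.range (m+1)).card + S.card := Finset.card_union_le _ _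
    _ = (m+1) + S.card := by rw [Finset.card_range]
  have h2 : m ^ S.card ≤ 4^n := by
    have ha : m ^ S.card ≤ ∏ p ∈ S, p :=
      Finset.pow_card_le_prod S id m (fun p hp => le_of_lt ((Finset.mem_filter.1 hp).2.2))
    have hb : ∏ p ∈ S, p ≤ ∏ p ∈ T, p := by
      apply Finset.prod_le_prod_of_subset_of_one_le'
      · intro p hp
        rw [hS, Finset.mem_filter] at hp
        rw [hT, Finset.mem_filter]
        exact ⟨hp.1, hp.2.1⟩
      · intro i hi _
        exact ((Finset.mem_filter.1 hi).2).one_lt.le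
    have hc : ∏ p ∈ T, p ≤ 4^n := by
      have := primorial_le_4_pow n
      unfold primorial at this
      exact this
    omega
  have h3 : S.card * j ≤ 2*n := by
    have : (2:ℕ) ^ (j * S.card) ≤ 2 ^ (2*n) := by
      calc (2:ℕ) ^ (j * S.card) = m ^ S.card := by rw [hm, pow_mul]
      _ ≤ 4^n := h2
      _ = 2^(2*n) := by rw [show (4:ℕ) = 2^2 by norm_num, ← pow_mul]
    have h := (Nat.pow_le_pow_iff_right (by norm_num)).1 this
    rwa [Nat.mul_comm] at h
  have h4 : k+1 ≤ 2*j := by omega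
  have h5 : S.card * (k+1) ≤ 4*n := by
    calc S.card * (k+1) ≤ S.card * (2*j) := Nat.mul_le_mul_left _ h4
    _ = 2*(S.card * j) := by ring
    _ ≤ 2*(2*n) := Nat.mul_le_mul_left _ h3
    _ = 4*n := by ring
  have h6 : (m+1)*(k+1) ≤ 4*n := by
    set u := k+2-j with hu
    have hu2 : k+2 ≤ 2*u := by omega
    have hu1 : 1 ≤ u := by omega
    have hk1 : k+1 ≤ 2^u := le_trans (by omega) (le_trans hu2 (aux_two_mul_le_two_pow u hu1))
    have hm1 : m+1 ≤ 2^(j+1) := by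
      have : 1 ≤ 2^j := Nat.one_le_two_pow
      rw [hm]; omega
    calc (m+1)*(k+1) ≤ 2^(j+1) * 2^u := Nat.mul_le_mul hm1 hk1
    _ = 2^(j+1+u) := by rw [← pow_add]
    _ = 2^(k+3) := by congr 1; omega
    _ = 4*n := by rw [hn]; ring
  calc T.card * (k+1) ≤ ((m+1) + S.card)*(k+1) := Nat.mul_le_mul_right _ h1
  _ = (m+1)*(k+1) + S.card*(k+1) := by ring
  _ ≤ 4*n + 4*n := Nat.add_le_add h6 h5
  _ = 2^(k+4) := by rw [hn]; ring

lemma log1_pos (x : ℝ) : 0 < log1 x := lt_of_lt_of_le one_pos (le_max_right _ _)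
lemma one_le_log1 (x : ℝ) : 1 ≤ log1 x := le_max_right _ _

lemma log1_mono {x y : ℝ} (hx : 0 < x) (h : x ≤ y) : log1 x ≤ log1 y :=
  max_le_max (Real.log_le_log hx h) le_rfl

/-- summability of `1/(n (log1 n)^2)` -/
lemma summable_f : Summable (fun n : ℕ => 1 / ((n : ℝ) * (log1 n)^2)) := by
  have hnonneg : ∀ n : ℕ, 0 ≤ 1 / ((n : ℝ) * (log1 n)^2) := by
    intro n
    apply div_nonneg one_pos.le
    exact mul_nonneg (Nat.cast_nonneg n) (sq_nonneg _)
  refine (summable_condensed_iff_of_nonneg hnonneg ?_).1 ?_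
  · intro m n hm hmn
    apply one_div_le_one_div_of_le
    · apply mul_pos (by exact_mod_cast hm)
      exact pow_pos (log1_pos _) 2
    · apply mul_le_mul (by exact_mod_cast hmn)
      · apply pow_le_pow_left₀ (log1_pos _).le
        exact log1_mono (by exact_mod_cast hm) (by exact_mod_cast hmn)
      · exact sq_nonneg _
      · exact Nat.cast_nonneg n
  · have heq : ∀ k : ℕ, (2:ℝ)^k * (1 / ((2^k : ℕ) * (log1 (2^k : ℕ))^2))
        = 1 / (log1 ((2:ℝ)^k))^2 := by
      intro k
      have h2 : ((2^k : ℕ) : ℝ) = (2:ℝ)^k := by push_cast; ring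
      have hL : (log1 ((2:ℝ)^k))^2 ≠ 0 := pow_ne_zero _ (log1_pos _).ne'
      have hP : ((2:ℝ)^k) ≠ 0 := by positivity
      rw [h2, mul_one_div, div_eq_div_iff (mul_ne_zero hP hL) hL]
      ring
    simp_rw [heq]
    rw [← summable_nat_add_iff 4]
    have hbound : ∀ n : ℕ, 1 / (log1 ((2:ℝ)^(n+4)))^2 ≤ 4 / ((n:ℝ)+1)^2 := by
      intro n
      have hlog2 : (0.69:ℝ) ≤ Real.log 2 := le_of_lt (lt_of_lt_of_le (by norm_num) Real.log_two_gt_d9.le)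
      have h1 : ((n:ℝ)+1)/2 ≤ log1 ((2:ℝ)^(n+4)) := by
        have hpow : Real.log ((2:ℝ)^(n+4)) = ((n:ℝ)+4) * Real.log 2 := by
          rw [Real.log_pow]; push_cast; ring
        have h2 : ((n:ℝ)+1)/2 ≤ ((n:ℝ)+4) * Real.log 2 := by nlinarith [Nat.cast_nonneg (α := ℝ) n]
        calc ((n:ℝ)+1)/2 ≤ ((n:ℝ)+4) * Real.log 2 := h2
        _ = Real.log ((2:ℝ)^(n+4)) := hpow.symm
        _ ≤ log1 ((2:ℝ)^(n+4)) := le_max_left _ _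
      have hpos : (0:ℝ) < ((n:ℝ)+1)/2 := by positivity
      rw [div_le_div_iff₀ (pow_pos (log1_pos _) 2) (by positivity)]
      calc 1 * ((n:ℝ)+1)^2 = 4 * (((n:ℝ)+1)/2)^2 := by ring
      _ ≤ 4 * (log1 ((2:ℝ)^(n+4)))^2 := by
          have := pow_le_pow_left₀ hpos.le h1 2
          nlinarith
    apply Summable.of_nonneg_of_le (fun n => by positivity) hbound
    have h4 : Summable (fun n : ℕ => 4 / ((n:ℝ)+1)^2) := by
      have hs := (Real.summable_one_div_nat_pow (p := 2)).2 (by norm_num)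
      have h := (summable_nat_add_iff (f := fun n : ℕ => 1 / ((n:ℝ))^2) 1).2 hs
      have h2 := h.mul_left 4
      apply h2.congr
      intro n
      push_cast
      ring
    exact h4

/-- lower bound for `log2` at dyadic points -/
lemma log2_dyadic (k : ℕ) : (1/2) * log1 ((k:ℝ)+2) ≤ log2 ((2:ℝ)^(k+2)) := by
  rcases le_or_gt (log1 ((k:ℝ)+2)) 2 with h | h
  · calc (1/2) * log1 ((k:ℝ)+2) ≤ (1/2) * 2 := by linarith [log1_pos ((k:ℝ)+2)]
    _ = 1 := by norm_num
    _ ≤ log2 ((2:ℝ)^(k+2)) := one_le_log1 _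
  · have hlogk : 2 < Real.log ((k:ℝ)+2) := by
      by_contra hc
      push_neg at hc
      have : log1 ((k:ℝ)+2) ≤ 2 := max_le hc one_le_two
      linarith
    have hl1 : log1 ((k:ℝ)+2) = Real.log ((k:ℝ)+2) := max_eq_left (by linarith)
    have hlog2pos : (0.69:ℝ) < Real.log 2 := lt_of_lt_of_le (by norm_num) Real.log_two_gt_d9.le
    have hexp : Real.exp (-1) ≤ Real.log 2 := by
      have he : (2.7:ℝ) < Real.exp 1 := lt_trans (by norm_num) Real.exp_one_gt_d9
      have hrw : Real.exp (-1) = (Real.exp 1)⁻¹ := by rw [← Real.exp_neg]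
      rw [hrw]
      have h27 : (0:ℝ) < 2.7 := by norm_num
      have hinv := inv_anti₀ h27 he.le
      calc (Real.exp 1)⁻¹ ≤ (2.7:ℝ)⁻¹ := hinv
      _ ≤ 0.69 := by norm_num
      _ ≤ Real.log 2 := hlog2pos.le
    have hloglog2 : (-1:ℝ) ≤ Real.log (Real.log 2) := by
      calc (-1:ℝ) = Real.log (Real.exp (-1)) := (Real.log_exp _).symm
      _ ≤ Real.log (Real.log 2) := Real.log_le_log (Real.exp_pos _) hexp
    have hA : (0:ℝ) < ((k:ℝ)+2) * Real.log 2 := by positivity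
    have h1 : ((k:ℝ)+2) * Real.log 2 ≤ log1 ((2:ℝ)^(k+2)) := by
      have hpow : Real.log ((2:ℝ)^(k+2)) = ((k:ℝ)+2) * Real.log 2 := by
        rw [Real.log_pow]; push_cast; ring
      rw [← hpow]; exact le_max_left _ _
    have h2 : Real.log (((k:ℝ)+2) * Real.log 2) ≤ log2 ((2:ℝ)^(k+2)) := by
      calc Real.log (((k:ℝ)+2) * Real.log 2) ≤ Real.log (log1 ((2:ℝ)^(k+2))) :=
        Real.log_le_log hA h1
      _ ≤ log2 ((2:ℝ)^(k+2)) := le_max_left _ _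
    have h3 : Real.log (((k:ℝ)+2) * Real.log 2) = Real.log ((k:ℝ)+2) + Real.log (Real.log 2) :=
      Real.log_mul (by positivity) (by linarith)
    rw [hl1]
    calc (1/2) * Real.log ((k:ℝ)+2) ≤ Real.log ((k:ℝ)+2) - 1 := by linarith
    _ ≤ Real.log ((k:ℝ)+2) + Real.log (Real.log 2) := by linarith
    _ = Real.log (((k:ℝ)+2) * Real.log 2) := h3.symm
    _ ≤ log2 ((2:ℝ)^(k+2)) := h2

/-- `|log(1-x)| ≤ 2x` for `0 ≤ x ≤ 1/2` -/
lemma abs_log_one_sub_le {x : ℝ} (h0 : 0 ≤ x) (h1 : x ≤ 1/2) : |Real.log (1 - x)| ≤ 2*x := by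
  have hpos : (0:ℝ) < 1 - x := by linarith
  have hle1 : 1 - x ≤ 1 := by linarith
  have hlog_nonpos : Real.log (1 - x) ≤ 0 := Real.log_nonpos hpos.le hle1
  rw [abs_of_nonpos hlog_nonpos]
  have hexp : Real.exp (-(2*x)) ≤ 1 - x := by
    have h := Real.add_one_le_exp (2*x)
    have hpos2 : (0:ℝ) < 1 + 2*x := by linarith
    have hrw : Real.exp (-(2*x)) = (Real.exp (2*x))⁻¹ := by rw [← Real.exp_neg]
    rw [hrw]
    have hinv : (Real.exp (2*x))⁻¹ ≤ (1 + 2*x)⁻¹ := by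
      apply inv_anti₀ hpos2
      linarith
    calc (Real.exp (2*x))⁻¹ ≤ (1 + 2*x)⁻¹ := hinv
    _ ≤ 1 - x := by
        rw [inv_le_iff_one_le_mul₀ hpos2]
        nlinarith
  have hlog := Real.log_le_log (Real.exp_pos _) hexp
  rw [Real.log_exp] at hlog
  linarith

/-- Counting zero primes via A2. -/
lemma zero_count (a : ℕ → ℝ) (hA2 : A2 a) :
    ∃ K : ℝ, 0 ≤ K ∧ ∀ x : ℝ, 3 ≤ x →
      (((primesUpTo x).filter (fun p => a p = 0)).card : ℝ) ≤
        K * ((primesUpTo x).card : ℝ) * (log2 x) ^ (-2 : ℝ) := by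
  obtain ⟨K, hK⟩ := hA2 2 two_pos
  refine ⟨max K 0, le_max_right _ _, ?_⟩
  intro x hx
  have hpi := Real.pi_pos
  have h := hK (Real.pi/2) (Real.pi/2) x (by linarith) le_rfl (by linarith) hx
  rw [intervalIntegral.integral_same, mul_zero, sub_zero] at h
  have h2mem : 2 ∈ primesUpTo x := by
    unfold primesUpTo
    rw [Finset.mem_filter, Finset.mem_range]
    refine ⟨?_, Nat.prime_two⟩
    have : (2:ℕ) ≤ ⌊x⌋₊ := Nat.le_floor (by push_cast; linarith)
    omega
  have hP : (0:ℝ) < ((primesUpTo x).card : ℝ) := by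
    have := Finset.card_pos.2 ⟨2, h2mem⟩
    exact_mod_cast this
  have habs := (abs_le.1 h).2
  have hsubset : (primesUpTo x).filter (fun p => a p = 0) ⊆
      (primesUpTo x).filter (fun p => thetaOf a p ∈ Set.Icc (Real.pi/2) (Real.pi/2)) := by
    intro p hp
    rw [Finset.mem_filter] at hp ⊢
    refine ⟨hp.1, ?_⟩
    have : thetaOf a p = Real.pi/2 := by
      unfold thetaOf
      rw [hp.2]
      norm_num [Real.arccos_zero]
    rw [this]
    exact Set.mem_Icc.2 ⟨le_rfl, le_rfl⟩
  have hcard : (((primesUpTo x).filter (fun p => a p = 0)).card : ℝ) ≤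
      (((primesUpTo x).filter (fun p => thetaOf a p ∈ Set.Icc (Real.pi/2) (Real.pi/2))).card : ℝ) := by
    exact_mod_cast Finset.card_le_card hsubset
  have hR : (0:ℝ) < (log2 x) ^ (-2 : ℝ) := Real.rpow_pos_of_pos (log1_pos _) _
  have h2 : (((primesUpTo x).filter (fun p => thetaOf a p ∈ Set.Icc (Real.pi/2) (Real.pi/2))).card : ℝ)
      ≤ K * (log2 x) ^ (-2 : ℝ) * ((primesUpTo x).card : ℝ) := by
    rw [← div_le_iff₀ hP] at *
    exact habs
  calc (((primesUpTo x).filter (fun p => a p = 0)).card : ℝ)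
      ≤ K * (log2 x) ^ (-2 : ℝ) * ((primesUpTo x).card : ℝ) := le_trans hcard h2
  _ ≤ max K 0 * (log2 x) ^ (-2 : ℝ) * ((primesUpTo x).card : ℝ) := by
      apply mul_le_mul_of_nonneg_right _ hP.le
      exact mul_le_mul_of_nonneg_right (le_max_left _ _) hR.le
  _ = max K 0 * ((primesUpTo x).card : ℝ) * (log2 x) ^ (-2 : ℝ) := by ring

/-- for `a ∈ A_ST` satisfying A2, `∑_{p : a_p = 0} 1/p` converges, and the
infinite product `κ = ∏_{p : a_p = 0} (1 - 1/p)` converges to a strictly positive real. -/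
theorem kappa_positive (a : ℕ → ℝ) (hAST : IsAST a) (hA2 : A2 a) :
    Summable (fun p : {p : ℕ // p.Prime ∧ a p = 0} => (1 : ℝ) / ((p : ℕ) : ℝ)) ∧
    Multipliable (fun p : {p : ℕ // p.Prime ∧ a p = 0} => 1 - (1 : ℝ) / ((p : ℕ) : ℝ)) ∧
    0 < ∏' p : {p : ℕ // p.Prime ∧ a p = 0}, (1 - (1 : ℝ) / ((p : ℕ) : ℝ)) := by
  classical
  obtain ⟨K, hK0, hKbound⟩ := zero_count a hA2
  set g : ℕ → ℝ := fun p => if p.Prime ∧ a p = 0 then 1/(p:ℝ) else 0 with hg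
  have hgnonneg : ∀ p, 0 ≤ g p := by
    intro p
    rw [hg]
    dsimp only
    split
    · positivity
    · exact le_rfl
  set fR : ℕ → ℝ := fun k => 1/(((k:ℝ)+2) * (log1 ((k:ℝ)+2))^2) with hfR
  have hfRnonneg : ∀ k, 0 ≤ fR k := by
    intro k
    rw [hfR]
    dsimp only
    apply div_nonneg one_pos.le
    apply mul_nonneg (by positivity) (sq_nonneg _)
  have hfRsum : Summable fR := by
    have h := (summable_nat_add_iff (f := fun n : ℕ => 1 / ((n : ℝ) * (log1 n)^2)) 2).2 summable_f
    apply h.congr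
    intro k
    rw [hfR]
    have : ((k+2 : ℕ) : ℝ) = (k:ℝ)+2 := by push_cast; ring
    dsimp only
    rw [this]
  -- block bound
  have hblock : ∀ T : ℕ, ∑ i ∈ Finset.Ico (2^(T+1)) (2^(T+2)), g i ≤ 64*K * fR T := by
    intro T
    set Zset := (Finset.Ico (2^(T+1)) (2^(T+2))).filter (fun i => i.Prime ∧ a i = 0) with hZset
    have hstep1 : ∑ i ∈ Finset.Ico (2^(T+1)) (2^(T+2)), g i ≤ (Zset.card : ℝ) * ((2:ℝ)^(T+1))⁻¹ := by
      have hle : ∀ i ∈ Finset.Ico (2^(T+1)) (2^(T+2)), g i ≤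
          (if i.Prime ∧ a i = 0 then ((2:ℝ)^(T+1))⁻¹ else 0) := by
        intro i hi
        rw [Finset.mem_Ico] at hi
        rw [hg]
        dsimp only
        split
        · rw [one_div]
          apply inv_anti₀ (by positivity)
          calc (2:ℝ)^(T+1) = ((2^(T+1) : ℕ) : ℝ) := by push_cast; ring
          _ ≤ (i:ℝ) := by exact_mod_cast hi.1
        · exact le_rfl
      calc ∑ i ∈ Finset.Ico (2^(T+1)) (2^(T+2)), g i
          ≤ ∑ i ∈ Finset.Ico (2^(T+1)) (2^(T+2)),
              (if i.Prime ∧ a i = 0 then ((2:ℝ)^(T+1))⁻¹ else 0) := Finset.sum_le_sum hle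
      _ = ∑ i ∈ Zset, ((2:ℝ)^(T+1))⁻¹ := (Finset.sum_filter _ _).symm
      _ = (Zset.card : ℝ) * ((2:ℝ)^(T+1))⁻¹ := by
          rw [Finset.sum_const, nsmul_eq_mul]
    have hfloor : ⌊(2:ℝ)^(T+2)⌋₊ = 2^(T+2) := by
      rw [show ((2:ℝ)^(T+2)) = ((2^(T+2) : ℕ) : ℝ) by push_cast; ring, Nat.floor_natCast]
    have hPU : primesUpTo ((2:ℝ)^(T+2)) = (Finset.range (2^(T+2)+1)).filter Nat.Prime := by
      unfold primesUpTo
      rw [hfloor]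
    have hstep2 : (Zset.card : ℝ) ≤
        (((primesUpTo ((2:ℝ)^(T+2))).filter (fun p => a p = 0)).card : ℝ) := by
      have hsub : Zset ⊆ (primesUpTo ((2:ℝ)^(T+2))).filter (fun p => a p = 0) := by
        intro i hi
        rw [hZset, Finset.mem_filter, Finset.mem_Ico] at hi
        rw [Finset.mem_filter, hPU, Finset.mem_filter, Finset.mem_range]
        exact ⟨⟨by omega, hi.2.1⟩, hi.2.2⟩
      exact_mod_cast Finset.card_le_card hsub
    have hx3 : (3:ℝ) ≤ (2:ℝ)^(T+2) := by
      calc (3:ℝ) ≤ 4 := by norm_num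
      _ = (2:ℝ)^2 := by norm_num
      _ ≤ (2:ℝ)^(T+2) := pow_le_pow_right₀ one_le_two (by omega)
    have hstep3 := hKbound ((2:ℝ)^(T+2)) hx3
    -- Chebyshev bound on the number of primes
    have hcheb : ((primesUpTo ((2:ℝ)^(T+2))).card : ℝ) ≤ (2:ℝ)^(T+5) / ((T:ℝ)+2) := by
      have h := cheb (T+1)
      rw [hPU]
      have hc : (((Finset.range (2^(T+2)+1)).filter Nat.Prime).card : ℝ) * ((T:ℝ)+2) ≤ (2:ℝ)^(T+5) := by
        calc (((Finset.range (2^(T+2)+1)).filter Nat.Prime).card : ℝ) * ((T:ℝ)+2)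
            = ((((Finset.range (2^(T+2)+1)).filter Nat.Prime).card * (T+2) : ℕ) : ℝ) := by
              push_cast; ring
        _ ≤ ((2^(T+5) : ℕ) : ℝ) := by exact_mod_cast h
        _ = (2:ℝ)^(T+5) := by push_cast; ring
      rw [le_div_iff₀ (by positivity)]
      exact hc
    -- log2 bound
    have hlogb : (log2 ((2:ℝ)^(T+2))) ^ (-2:ℝ) ≤ 4 / (log1 ((T:ℝ)+2))^2 := by
      have hld := log2_dyadic T
      have hLpos := log1_pos ((T:ℝ)+2)
      have hpos : (0:ℝ) < (1/2) * log1 ((T:ℝ)+2) := by linarith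
      have h1 : (log2 ((2:ℝ)^(T+2))) ^ (-2:ℝ) ≤ ((1/2) * log1 ((T:ℝ)+2)) ^ (-2:ℝ) :=
        Real.rpow_le_rpow_of_nonpos hpos hld (by norm_num)
      have h2 : ((1/2) * log1 ((T:ℝ)+2)) ^ (-2:ℝ) = 4 / (log1 ((T:ℝ)+2))^2 := by
        rw [show (-2:ℝ) = -((2:ℕ):ℝ) by norm_num, Real.rpow_neg hpos.le, Real.rpow_natCast]
        rw [eq_div_iff (pow_ne_zero _ hLpos.ne')]
        rw [inv_mul_eq_div, div_eq_iff (by positivity)]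
        ring
      linarith
    -- combine
    have hRnn : (0:ℝ) ≤ (log2 ((2:ℝ)^(T+2))) ^ (-2:ℝ) :=
      (Real.rpow_pos_of_pos (log1_pos _) _).le
    have hfinal : (Zset.card:ℝ) * ((2:ℝ)^(T+1))⁻¹ ≤ 64*K*fR T := by
      have hLpos := log1_pos ((T:ℝ)+2)
      have hKP : K * ((primesUpTo ((2:ℝ)^(T+2))).card : ℝ) ≤ K * ((2:ℝ)^(T+5)/((T:ℝ)+2)) :=
        mul_le_mul_of_nonneg_left hcheb hK0
      have hKP' : (0:ℝ) ≤ K * ((2:ℝ)^(T+5)/((T:ℝ)+2)) := by positivity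
      have hmid : K * ((primesUpTo ((2:ℝ)^(T+2))).card : ℝ) * (log2 ((2:ℝ)^(T+2))) ^ (-2:ℝ)
          ≤ K * ((2:ℝ)^(T+5)/((T:ℝ)+2)) * (4/(log1 ((T:ℝ)+2))^2) :=
        mul_le_mul hKP hlogb hRnn hKP'
      calc (Zset.card:ℝ) * ((2:ℝ)^(T+1))⁻¹
          ≤ (K * ((primesUpTo ((2:ℝ)^(T+2))).card : ℝ) * (log2 ((2:ℝ)^(T+2))) ^ (-2:ℝ))
              * ((2:ℝ)^(T+1))⁻¹ :=
            mul_le_mul_of_nonneg_right (le_trans hstep2 hstep3) (by positivity)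
      _ ≤ (K * ((2:ℝ)^(T+5)/((T:ℝ)+2)) * (4/(log1 ((T:ℝ)+2))^2)) * ((2:ℝ)^(T+1))⁻¹ :=
            mul_le_mul_of_nonneg_right hmid (by positivity)
      _ = 64*K*fR T := by
            rw [hfR]
            dsimp only
            have hTne : ((T:ℝ)+2) ≠ 0 := by positivity
            have hLne : (log1 ((T:ℝ)+2))^2 ≠ 0 := pow_ne_zero _ hLpos.ne'
            field_simp
            ring
    exact le_trans hstep1 hfinal
  -- sum over all initial segments is bounded
  have hmain : ∀ T : ℕ, ∑ i ∈ Finset.range (2^(T+1)), g i ≤ 64*K * ∑ k ∈ Finset.range T, fR k := by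
    intro T
    induction T with
    | zero =>
      show ∑ i ∈ Finset.range (2^1), g i ≤ 64*K * ∑ k ∈ Finset.range 0, fR k
      simp only [Finset.range_zero, Finset.sum_empty, mul_zero, pow_one]
      have h01 : ∑ i ∈ Finset.range 2, g i = 0 := by
        rw [Finset.sum_range_succ, Finset.sum_range_one, hg]
        simp [Nat.not_prime_zero, Nat.not_prime_one]
      rw [h01]
    | succ T ih =>
      show ∑ i ∈ Finset.range (2^(T+2)), g i ≤ 64*K * ∑ k ∈ Finset.range (T+1), fR k
      have hsplit : ∑ i ∈ Finset.range (2^(T+2)), g i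
          = ∑ i ∈ Finset.range (2^(T+1)), g i + ∑ i ∈ Finset.Ico (2^(T+1)) (2^(T+2)), g i := by
        simp only [Finset.range_eq_Ico]
        exact (Finset.sum_Ico_consecutive g (Nat.zero_le _)
          (Nat.pow_le_pow_right (by norm_num) (by omega))).symm
      rw [hsplit, Finset.sum_range_succ, mul_add]
      exact add_le_add ih (hblock T)
  have hbounded : ∀ n : ℕ, ∑ i ∈ Finset.range n, g i ≤ 64*K * ∑' k, fR k := by
    intro n
    have h1 : ∑ i ∈ Finset.range n, g i ≤ ∑ i ∈ Finset.range (2^(n+1)), g i := by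
      apply Finset.sum_le_sum_of_subset_of_nonneg
      · apply Finset.range_subset_range.2
        calc n ≤ 2^n := Nat.lt_two_pow_self.le
        _ ≤ 2^(n+1) := Nat.pow_le_pow_right (by norm_num) (by omega)
      · intro i _ _
        exact hgnonneg i
    have h3 : ∑ k ∈ Finset.range n, fR k ≤ ∑' k, fR k :=
      hfRsum.sum_le_tsum _ (fun k _ => hfRnonneg k)
    calc ∑ i ∈ Finset.range n, g i ≤ 64*K * ∑ k ∈ Finset.range n, fR k :=
      le_trans h1 (hmain n)
    _ ≤ 64*K * ∑' k, fR k := mul_le_mul_of_nonneg_left h3 (by linarith)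
  have hgsum : Summable g := summable_of_sum_range_le hgnonneg hbounded
  -- transfer to the subtype
  have hsum1 : Summable (fun p : {p : ℕ // p.Prime ∧ a p = 0} => (1:ℝ)/((p:ℕ):ℝ)) := by
    have hind : g = Set.indicator {p : ℕ | p.Prime ∧ a p = 0} (fun p => 1/(p:ℝ)) := by
      funext p
      rw [Set.indicator_apply, hg]
      by_cases h : p.Prime ∧ a p = 0 <;> simp [h]
    rw [hind] at hgsum
    exact summable_subtype_iff_indicator.2 hgsum
  -- the product
  have hfact : ∀ p : {p : ℕ // p.Prime ∧ a p = 0},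
      (0:ℝ) < 1 - 1/((p:ℕ):ℝ) ∧ 1/((p:ℕ):ℝ) ≤ 1/2 ∧ (0:ℝ) ≤ 1/((p:ℕ):ℝ) := by
    intro p
    have h2p : (2:ℝ) ≤ ((p:ℕ):ℝ) := by exact_mod_cast p.2.1.two_le
    have hppos : (0:ℝ) < ((p:ℕ):ℝ) := by linarith
    have hhalf : 1/((p:ℕ):ℝ) ≤ 1/2 := one_div_le_one_div_of_le (by norm_num) h2p
    exact ⟨by linarith, hhalf, by positivity⟩
  set L : {p : ℕ // p.Prime ∧ a p = 0} → ℝ := fun p => Real.log (1 - 1/((p:ℕ):ℝ)) with hLdef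
  have hLabs : ∀ p, |L p| ≤ 2 * (1/((p:ℕ):ℝ)) := by
    intro p
    exact abs_log_one_sub_le (hfact p).2.2 (hfact p).2.1
  have hLsum : Summable L := by
    apply Summable.of_abs
    exact Summable.of_nonneg_of_le (fun p => abs_nonneg _) hLabs (hsum1.mul_left 2)
  have hprod : HasProd (fun p : {p : ℕ // p.Prime ∧ a p = 0} => 1 - (1:ℝ)/((p:ℕ):ℝ))
      (Real.exp (∑' p, L p)) := by
    have h := hLsum.hasSum.rexp
    have hfun : Real.exp ∘ L = fun p : {p : ℕ // p.Prime ∧ a p = 0} => 1 - (1:ℝ)/((p:ℕ):ℝ) := by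
      funext p
      simp only [Function.comp_apply, hLdef]
      exact Real.exp_log (hfact p).1
    rwa [hfun] at h
  exact ⟨hsum1, hprod.multipliable, by rw [hprod.tprod_eq]; exact Real.exp_pos _⟩
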